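/- arXiv:2502.08263 — 2 statements merged into one kernel-verified Lean document; each statement's English description precedes it below -/
import Mathlib

section
/- (Slash in terms of double-slash) Let f : Ω → L be quasi-modular of weight k, type m and depth ≤ ℓ for Γ with coefficient family (f₀,…,f_ℓ). Then for every γ = (a, b; c, d) ∈ GL₂(F) and z ∈ Ω: (f |_{k,m} γ)(z) = Σ_{i=0}^{ℓ} (c/(cz+d))^i · (f_i ∥_{k−2i,m−i} γ)(z), where the double-slash of f_i is taken with respect to the coefficient family ((f_i)_h)_h = ((h+i choose i)·f_{h+i})_{h=0,…,ℓ−i}, i.e. (f_i ∥_{k−2i,m−i} γ)(z) = Σ_{h=0}^{ℓ−i} (−c/(cz+d))^h (det γ)^{(m−i)−h} (cz+d)^{2h−(k−2i)} (h+i choose i) f_{h+i}(γ·z). -/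
/-!
Write `x = c/(cz+d)` and `a_n = (det γ)^{m-n} (cz+d)^{2n-k} f_n(γz)`. Expanding every double
slash, the right-hand side is `∑_{i+h ≤ ℓ} binom(h+i, i) x^i (-x)^h a_{h+i}`; collecting the terms
with `h + i = n`, the coefficient of `a_n` is `(x - x)^n` by the binomial theorem, so only
`a_0` survives, which is `(f |_{k,m} γ)(z)` because `f_0 = f` at `γz ∈ Ω`.
-/

noncomputable section

namespace DrinfeldQM

variable {L : Type*} [Field L]

/-- Entry `(i,j)` of `γ ∈ GL₂(F)`, viewed inside `L`. -/
def Mc (F : Subfield L) (γ : GL (Fin 2) F) (i j : Fin 2) : L :=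
  ((γ : Matrix (Fin 2) (Fin 2) F) i j : L)

/-- Determinant of `γ ∈ GL₂(F)`, viewed inside `L`. -/
def detL (F : Subfield L) (γ : GL (Fin 2) F) : L :=
  ((γ : Matrix (Fin 2) (Fin 2) F).det : L)

/-- Automorphy factor `cz + d`. -/
def jf (F : Subfield L) (γ : GL (Fin 2) F) (z : L) : L :=
  Mc F γ 1 0 * z + Mc F γ 1 1

/-- Fractional linear action of `GL₂(F)` on `L` (restricting to `Ω`). -/
def act (F : Subfield L) (γ : GL (Fin 2) F) (z : L) : L :=
  (Mc F γ 0 0 * z + Mc F γ 0 1) / jf F γ z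

/-- The Drinfeld upper half plane `Ω = L ∖ F`. -/
def Omega (F : Subfield L) : Set L := {z | z ∉ F}

/-- The slash operator `f |_{k,m} γ` of weight `k` and type `m`. -/
def slash (F : Subfield L) (k m : ℤ) (f : L → L) (γ : GL (Fin 2) F) : L → L :=
  fun z => detL F γ ^ m * jf F γ z ^ (-k) * f (act F γ z)

/-- `f` is quasi-modular of weight `k`, type `m` and depth `≤ ℓ` for the set `S ⊆ GL₂(F)`
with coefficient family `fam` (only the indices `0,…,ℓ` of `fam` are relevant). -/
def IsQM (F : Subfield L) (S : Set (GL (Fin 2) F)) (k m : ℤ) (ℓ : ℕ)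
    (f : L → L) (fam : ℕ → L → L) : Prop :=
  Set.EqOn (fam 0) f (Omega F) ∧
    ∀ γ ∈ S, ∀ z ∈ Omega F,
      slash F k m f γ z =
        ∑ i ∈ Finset.range (ℓ + 1), fam i z * (Mc F γ 1 0 / jf F γ z) ^ i

/-- The coefficient family of the `i`-th coefficient `f_i` of a quasi-modular function with
coefficient family `fam`:  `(f_i)_h = ((h+i) choose i) · f_{h+i}`. -/
def shiftFam (i : ℕ) (fam : ℕ → L → L) : ℕ → L → L :=
  fun h z => ((h + i).choose i : L) * fam (h + i) z

/-- The double-slash operator `f ∥_{k,m} γ` of a quasi-modular function of depth `≤ ℓ` with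
coefficient family `fam`. -/
def dslash (F : Subfield L) (k m : ℤ) (ℓ : ℕ) (fam : ℕ → L → L)
    (γ : GL (Fin 2) F) : L → L :=
  fun z => ∑ i ∈ Finset.range (ℓ + 1),
    (-(Mc F γ 1 0) / jf F γ z) ^ i * detL F γ ^ (m - (i : ℤ)) *
      jf F γ z ^ (2 * (i : ℤ) - k) * fam i (act F γ z)

/-- The double-slash operator on polynomial-valued functions `P : Ω → L[X]`:
`(P ∥_{k,m} γ)(z, X) = (det γ)^m (cz+d)^{-k} P(γ·z, ((cz+d)²/det γ)(X - c/(cz+d)))`. -/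
def pdslash (F : Subfield L) (k m : ℤ) (P : L → Polynomial L)
    (γ : GL (Fin 2) F) : L → Polynomial L :=
  fun z =>
    Polynomial.C (detL F γ ^ m * jf F γ z ^ (-k)) *
      (P (act F γ z)).comp
        (Polynomial.C (jf F γ z ^ 2 / detL F γ) *
          (Polynomial.X - Polynomial.C (Mc F γ 1 0 / jf F γ z)))

/-- The associated polynomial `P_f(z, X) = ∑_{i=0}^{ℓ} f_i(z) Xⁱ`. -/
def assocPoly (ℓ : ℕ) (fam : ℕ → L → L) : L → Polynomial L :=
  fun z => ∑ i ∈ Finset.range (ℓ + 1), Polynomial.C (fam i z) * Polynomial.X ^ i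

/-- `E` satisfies the functional equation of the false Eisenstein series (weight 2, type 1,
depth 1, coefficient family `(E, -π⁻¹)`) for all `γ ∈ S`. -/
def EFunEq (F : Subfield L) (S : Set (GL (Fin 2) F)) (π : L) (E : L → L) : Prop :=
  ∀ γ ∈ S, ∀ z ∈ Omega F,
    E (act F γ z) =
      (detL F γ)⁻¹ * jf F γ z ^ 2 * (E z - Mc F γ 1 0 / (π * jf F γ z))

open Finset

theorem sum_pow_mul_sum_neg_pow_mul_choose {R : Type*} [CommRing R] (x : R) (ℓ : ℕ)
    (a : ℕ → R) :
    ∑ i ∈ range (ℓ + 1), x ^ i * ∑ h ∈ range (ℓ - i + 1), (-x) ^ h * ((h + i).choose i : R) * a (h + i)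
      = a 0 := by
  calc _ = ∑ i ∈ range (ℓ + 1), ∑ h ∈ range (ℓ + 1 - i),
        x ^ i * ((-x) ^ h * ((h + i).choose i : R) * a (h + i)) := by
        refine sum_congr rfl fun i hi => ?_
        rw [mul_sum, Nat.sub_add_comm (Nat.lt_succ_iff.mp (mem_range.mp hi))]
    _ = ∑ n ∈ range (ℓ + 1), ∑ i ∈ range (n + 1),
        x ^ i * ((-x) ^ (n - i) * ((n - i + i).choose i : R) * a (n - i + i)) :=
        (sum_range_diag_flip _ _).symm
    _ = ∑ n ∈ range (ℓ + 1), (x + -x) ^ n * a n := by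
        refine sum_congr rfl fun n _ => ?_
        rw [add_pow, sum_mul]
        refine sum_congr rfl fun i hi => ?_
        rw [Nat.sub_add_cancel (Nat.lt_succ_iff.mp (mem_range.mp hi))]
        ring
    _ = a 0 := by
        simp [sum_range_succ' _ ℓ]

theorem Mc_mem (F : Subfield L) (γ : GL (Fin 2) F) (i j : Fin 2) : Mc F γ i j ∈ F :=
  SetLike.coe_mem _

theorem detL_eq (F : Subfield L) (γ : GL (Fin 2) F) :
    detL F γ = Mc F γ 0 0 * Mc F γ 1 1 - Mc F γ 0 1 * Mc F γ 1 0 := by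
  simp [detL, Mc, Matrix.det_fin_two]

theorem detL_ne_zero (F : Subfield L) (γ : GL (Fin 2) F) : detL F γ ≠ 0 := by
  simpa [detL] using ((Matrix.isUnit_iff_isUnit_det _).mp γ.isUnit).ne_zero

theorem eq_zero_of_mul_add_eq_zero {F : Subfield L} {p q z : L} (hp : p ∈ F) (hq : q ∈ F)
    (hz : z ∈ Omega F) (h : p * z + q = 0) : p = 0 ∧ q = 0 := by
  have hp0 : p = 0 := by
    by_contra hp0
    apply hz
    rw [show z = -q / p by field_simp; linear_combination h]
    exact F.div_mem (F.neg_mem hq) hp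
  exact ⟨hp0, by simpa [hp0] using h⟩

theorem jf_ne_zero (F : Subfield L) (γ : GL (Fin 2) F) {z : L} (hz : z ∈ Omega F) :
    jf F γ z ≠ 0 := by
  intro h
  obtain ⟨hc, hd⟩ := eq_zero_of_mul_add_eq_zero (Mc_mem F γ 1 0) (Mc_mem F γ 1 1) hz h
  exact detL_ne_zero F γ (by rw [detL_eq, hc, hd]; ring)

theorem act_mem_Omega (F : Subfield L) (γ : GL (Fin 2) F) {z : L} (hz : z ∈ Omega F) :
    act F γ z ∈ Omega F := by
  intro hw
  set w := act F γ z
  have hlin : (Mc F γ 0 0 - w * Mc F γ 1 0) * z + (Mc F γ 0 1 - w * Mc F γ 1 1) = 0 := by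
    have : w * jf F γ z = Mc F γ 0 0 * z + Mc F γ 0 1 := div_mul_cancel₀ _ (jf_ne_zero F γ hz)
    rw [jf] at this
    linear_combination -this
  obtain ⟨ha, hb⟩ := eq_zero_of_mul_add_eq_zero
    (F.sub_mem (Mc_mem F γ 0 0) (F.mul_mem hw (Mc_mem F γ 1 0)))
    (F.sub_mem (Mc_mem F γ 0 1) (F.mul_mem hw (Mc_mem F γ 1 1))) hz hlin
  exact detL_ne_zero F γ (by
    rw [detL_eq, sub_eq_zero.mp ha, sub_eq_zero.mp hb]; ring)

/-- The slash operator expressed in terms of double-slash operators of the coefficients. -/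
theorem slash_eq_sum_dslash
    {L : Type*} [Field L] (F : Subfield L) (Γ : Subgroup (GL (Fin 2) F))
    (k m : ℤ) (ℓ : ℕ) (f : L → L) (fam : ℕ → L → L)
    (hQM : IsQM F (Γ : Set (GL (Fin 2) F)) k m ℓ f fam) :
    ∀ γ : GL (Fin 2) F, ∀ z ∈ Omega F,
      slash F k m f γ z =
        ∑ i ∈ Finset.range (ℓ + 1),
          (Mc F γ 1 0 / jf F γ z) ^ i *
            dslash F (k - 2 * (i : ℤ)) (m - (i : ℤ)) (ℓ - i) (shiftFam i fam) γ z := by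
  intro γ z hz
  let a : ℕ → L := fun n =>
    detL F γ ^ (m - n) * jf F γ z ^ (2 * (n : ℤ) - k) * fam n (act F γ z)
  calc slash F k m f γ z = a 0 := by simp [slash, a, hQM.1 (act_mem_Omega F γ hz)]
    _ = _ := (sum_pow_mul_sum_neg_pow_mul_choose (Mc F γ 1 0 / jf F γ z) ℓ a).symm
    _ = _ := by
      refine sum_congr rfl fun i _ => congrArg _ (sum_congr rfl fun h _ => ?_)
      have hdet : m - (i : ℤ) - h = m - ↑(h + i) := by push_cast; ring
      have hj : 2 * (h : ℤ) - (k - 2 * i) = 2 * ↑(h + i) - k := by push_cast; ring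
      simp only [a, shiftFam, hdet, hj, neg_div]
      ring

end DrinfeldQM
end
end

section
/- (Action of U_𝔭 on f·Eⁿ, Theorem 5.11) Assume 𝔽_q(T) ⊆ F, let 𝔪 ⊆ A be a nonzero ideal with 𝔭 ∤ 𝔪, let n ≥ 0, and assume E satisfies its functional equation for all γ ∈ GL₂(A). Let f : Ω → L be modular of weight k−2n and type m−n for Γ₀(𝔪𝔭). Then, pointwise on Ω: U_𝔭(f·Eⁿ) = Σ_{h=0}^{n} (n choose h)·℘^h·U_𝔭(f·E_𝔭^{n−h})·E^h. -/
noncomputable section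

namespace DrinfeldQM

variable {L : Type*} [Field L]

variable {Fq : Type*} [Field Fq] [Fintype Fq]

/-- The image in `L` of a polynomial `r ∈ A = Fq[T]` under `A → F ⊆ L`. -/
def iL (F : Subfield L) (ι : Polynomial Fq →+* F) (r : Polynomial Fq) : L := (ι r : L)

/-- `γ ∈ GL₂(F)` lies in `Γ₀(𝔞) ⊆ GL₂(A)`: its entries come from a matrix `M` over
`A = Fq[T]` with unit determinant whose lower-left entry lies in `𝔞`.
Taking `𝔞 = ⊤` expresses membership in `GL₂(A)`. -/
def InGamma0 (F : Subfield L) (ι : Polynomial Fq →+* F)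
    (𝔞 : Ideal (Polynomial Fq)) (γ : GL (Fin 2) F) : Prop :=
  ∃ M : Matrix (Fin 2) (Fin 2) (Polynomial Fq),
    (∀ i j, iL F ι (M i j) = Mc F γ i j) ∧ IsUnit M.det ∧ M 1 0 ∈ 𝔞

/-- `γ ∈ GL₂(F)` lies in the principal congruence subgroup `Γ(𝔫) ⊆ GL₂(A)`. -/
def InGammaN (F : Subfield L) (ι : Polynomial Fq →+* F)
    (𝔫 : Ideal (Polynomial Fq)) (γ : GL (Fin 2) F) : Prop :=
  ∃ M : Matrix (Fin 2) (Fin 2) (Polynomial Fq),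
    (∀ i j, iL F ι (M i j) = Mc F γ i j) ∧ IsUnit M.det ∧
      ∀ i j, M i j - (1 : Matrix (Fin 2) (Fin 2) (Polynomial Fq)) i j ∈ 𝔫

/-- `g` is modular of weight `w` and type `t` for `Γ₀(𝔞)`. -/
def IsModularOn (F : Subfield L) (ι : Polynomial Fq →+* F)
    (𝔞 : Ideal (Polynomial Fq)) (w t : ℤ) (g : L → L) : Prop :=
  ∀ γ : GL (Fin 2) F, InGamma0 F ι 𝔞 γ → ∀ z ∈ Omega F, slash F w t g γ z = g z

/-- The degeneracy map `(δ_𝔭 g)(z) = g(℘ z)`. -/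
def deltaP (F : Subfield L) (ι : Polynomial Fq →+* F) (℘ : Polynomial Fq)
    (g : L → L) : L → L := fun z => g (iL F ι ℘ * z)

/-- The Atkin–Lehner operator `(U_𝔭 g)(z) = ∑_{Q ∈ A, deg Q < deg ℘} g((z+Q)/℘)`,
where `Q = ∑ᵢ cᵢ Tⁱ` ranges over polynomials of degree `< deg ℘`. -/
def UP (F : Subfield L) (ι : Polynomial Fq →+* F) (℘ : Polynomial Fq)
    (g : L → L) : L → L :=
  fun z => ∑ c : Fin ℘.natDegree → Fq,
    g ((z + iL F ι (∑ i : Fin ℘.natDegree, Polynomial.C (c i) * Polynomial.X ^ (i : ℕ))) /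
      iL F ι ℘)

/-- The `𝔭`-stabilization `E_𝔭 = E - ℘·δ_𝔭E`. -/
def Ep (F : Subfield L) (ι : Polynomial Fq →+* F) (℘ : Polynomial Fq)
    (E : L → L) : L → L := fun z => E z - iL F ι ℘ * deltaP F ι ℘ E z

open Matrix.GeneralLinearGroup

section Translation

variable (F : Subfield L) (q : F) (z : L)

lemma Mc_upperRightHom_one_zero : Mc F (upperRightHom q) 1 0 = 0 := by
  simp [Mc]

lemma jf_upperRightHom : jf F (upperRightHom q) z = 1 := by
  simp [jf, Mc]

lemma detL_upperRightHom : detL F (upperRightHom q) = 1 := by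
  simp [detL, Matrix.det_fin_two_of]

lemma act_upperRightHom : act F (upperRightHom q) z = z + q := by
  rw [act, jf_upperRightHom, div_one]
  simp [Mc]

end Translation

lemma EFunEq.apply_add {F : Subfield L} {S : Set (GL (Fin 2) F)} {π : L} {E : L → L}
    (hE : EFunEq F S π E) {q : F} (hq : upperRightHom q ∈ S) {z : L} (hz : z ∈ Omega F) :
    E (z + q) = E z := by
  have := hE _ hq z hz
  rwa [act_upperRightHom, jf_upperRightHom, detL_upperRightHom, Mc_upperRightHom_one_zero,
    zero_div, sub_zero, inv_one, one_pow, one_mul, one_mul] at this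

lemma inGamma0_top_upperRightHom {Fq : Type*} [Field Fq] (F : Subfield L)
    (ι : Polynomial Fq →+* F) (Q : Polynomial Fq) : InGamma0 F ι ⊤ (upperRightHom (ι Q)) := by
  refine ⟨!![1, Q; 0, 1], fun i j => ?_, by simp [Matrix.det_fin_two_of], trivial⟩
  fin_cases i <;> fin_cases j <;> simp [iL, Mc]

lemma iL_ne_zero {Fq : Type*} [Field Fq] {F : Subfield L} {ι : Polynomial Fq →+* F}
    (hι : Function.Injective ι) {Q : Polynomial Fq} (hQ : Q ≠ 0) : iL F ι Q ≠ 0 := by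
  simpa [iL] using (map_ne_zero_iff ι hι).mpr hQ

/-- `U_𝔭` samples `E` only at points `w` with `℘ w = z + Q`, where `E (℘ w) = E z`. -/
lemma E_div_eq_mul_add_Ep {Fq : Type*} [Field Fq] (F : Subfield L) (ι : Polynomial Fq →+* F)
    (℘ : Polynomial Fq) {π : L} {E : L → L}
    (hE : EFunEq F {γ : GL (Fin 2) F | InGamma0 F ι ⊤ γ} π E) (h℘ : iL F ι ℘ ≠ 0)
    (Q : Polynomial Fq) {z : L} (hz : z ∈ Omega F) :
    E ((z + iL F ι Q) / iL F ι ℘) =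
      iL F ι ℘ * E z + Ep F ι ℘ E ((z + iL F ι Q) / iL F ι ℘) := by
  have hdelta : deltaP F ι ℘ E ((z + iL F ι Q) / iL F ι ℘) = E z := by
    rw [deltaP, mul_div_cancel₀ _ h℘]
    exact hE.apply_add (inGamma0_top_upperRightHom F ι Q) hz
  rw [Ep, hdelta, add_sub_cancel]

section Hecke

variable (F : Subfield L) (ι : Polynomial Fq →+* F) (℘ : Polynomial Fq)

lemma UP_congr {g g' : L → L} {z : L}
    (h : ∀ Q : Polynomial Fq, g ((z + iL F ι Q) / iL F ι ℘) = g' ((z + iL F ι Q) / iL F ι ℘)) :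
    UP F ι ℘ g z = UP F ι ℘ g' z :=
  Finset.sum_congr rfl fun _ _ => h _

lemma UP_sum_mul {ι' : Type*} (s : Finset ι') (c : ι' → L) (g : ι' → L → L) (z : L) :
    UP F ι ℘ (fun w => ∑ h ∈ s, c h * g h w) z = ∑ h ∈ s, c h * UP F ι ℘ (g h) z := by
  simp only [UP, Finset.mul_sum]
  exact Finset.sum_comm

end Hecke

theorem Up_mul_E_pow_general
    {L : Type*} [Field L] {Fq : Type*} [Field Fq] [Fintype Fq]
    (F : Subfield L) (ι : Polynomial Fq →+* F) (hι : Function.Injective ι)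
    (℘ : Polynomial Fq) (hmon : ℘.Monic)
    (π : L) (E : L → L)
    (hE : EFunEq F {γ : GL (Fin 2) F | InGamma0 F ι ⊤ γ} π E)
    (n : ℕ) (f : L → L) :
    ∀ z ∈ Omega F,
      UP F ι ℘ (fun w => f w * E w ^ n) z =
        ∑ h ∈ Finset.range (n + 1),
          (n.choose h : L) * iL F ι ℘ ^ h *
            UP F ι ℘ (fun w => f w * Ep F ι ℘ E w ^ (n - h)) z * E z ^ h := by
  intro z hz
  calc UP F ι ℘ (fun w => f w * E w ^ n) z
      = UP F ι ℘ (fun w => ∑ h ∈ Finset.range (n + 1),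
          (n.choose h * iL F ι ℘ ^ h * E z ^ h) * (f w * Ep F ι ℘ E w ^ (n - h))) z := by
        refine UP_congr F ι ℘ fun Q => ?_
        rw [E_div_eq_mul_add_Ep F ι ℘ hE (iL_ne_zero hι hmon.ne_zero) Q hz, add_comm, add_pow,
          Finset.mul_sum]
        refine Finset.sum_congr rfl fun h _ => ?_
        ring
    _ = _ := by
        rw [UP_sum_mul]
        refine Finset.sum_congr rfl fun h _ => ?_
        ring

/-- Theorem 5.11: `U_𝔭(f·Eⁿ) = ∑_{h=0}^{n} (n choose h) ℘ʰ U_𝔭(f·E_𝔭^{n-h}) Eʰ`. -/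
theorem Up_mul_E_pow
    {L : Type*} [Field L] {Fq : Type*} [Field Fq] [Fintype Fq]
    (F : Subfield L) (ι : Polynomial Fq →+* F) (hι : Function.Injective ι)
    (℘ : Polynomial Fq) (hmon : ℘.Monic) (hirr : Irreducible ℘)
    (𝔪 : Ideal (Polynomial Fq)) (h𝔪 : ¬ 𝔪 ≤ Ideal.span {℘})
    (π : L) (hπ : π ≠ 0) (E : L → L)
    (hE : EFunEq F {γ : GL (Fin 2) F | InGamma0 F ι ⊤ γ} π E)
    (k m : ℤ) (n : ℕ) (f : L → L)
    (hf : IsModularOn F ι (𝔪 * Ideal.span {℘}) (k - 2 * (n : ℤ)) (m - (n : ℤ)) f) :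
    ∀ z ∈ Omega F,
      UP F ι ℘ (fun w => f w * E w ^ n) z =
        ∑ h ∈ Finset.range (n + 1),
          (n.choose h : L) * iL F ι ℘ ^ h *
            UP F ι ℘ (fun w => f w * Ep F ι ℘ E w ^ (n - h)) z * E z ^ h :=
  Up_mul_E_pow_general F ι hι ℘ hmon π E hE n f

end DrinfeldQM
end
end
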